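/- Let f : V_G → V_F be a surjection such that adjacent vertices of G have equal or adjacent images, and let P be a partition of V_F into k parts with the property that for each part P_j, the induced subgraph of F on P_j is connected and each fiber f⁻¹(v) induces a connected subgraph of G, and for each edge {a,b} of F there is an edge of G between f⁻¹(a) and f⁻¹(b). Then each part of the pulled-back partition of V_G induces a connected subgraph of G. -/
import Mathlib

open SimpleGraph

private def inclHom {V : Type*} (G : SimpleGraph V) {S T : Set V} (h : S ⊆ T) :
    G.induce S →g G.induce T where
  toFun := fun x => ⟨x.1, h x.2⟩
  map_rel' := fun hadj => hadj

private lemma fiber_reach {VG VF : Type*} (G : SimpleGraph VG) (f : VG → VF)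
    (hfiber : ∀ v : VF, (G.induce (f ⁻¹' {v})).Connected)
    {S : Set VF} {a : VF} (ha : a ∈ S) {u v : VG} (hu : f u = a) (hv : f v = a)
    (hu' : u ∈ f ⁻¹' S) (hv' : v ∈ f ⁻¹' S) :
    (G.induce (f ⁻¹' S)).Reachable ⟨u, hu'⟩ ⟨v, hv'⟩ := by
  have hsub : f ⁻¹' {a} ⊆ f ⁻¹' S :=
    Set.preimage_mono (Set.singleton_subset_iff.mpr ha)
  have h := (hfiber a).preconnected ⟨u, hu⟩ ⟨v, hv⟩
  exact h.map (inclHom G hsub)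

/-- If each part of P induces a connected subgraph of F, each fiber of f induces
a connected subgraph of G, and each F-edge is realized by a G-edge between the
corresponding fibers, then each pullback part induces a connected subgraph of G. -/
theorem pullback_part_connected
    {VG VF : Type*} (G : SimpleGraph VG) (F : SimpleGraph VF)
    (f : VG → VF) (hf : Function.Surjective f)
    (hhom : ∀ u v, G.Adj u v → f u = f v ∨ F.Adj (f u) (f v))
    (k : ℕ) (P : Fin k → Set VF)
    (hdisj : ∀ i j, i ≠ j → Disjoint (P i) (P j))
    (hcover : (⋃ i, P i) = Set.univ)
    (hne : ∀ j, (P j).Nonempty)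
    (hPconn : ∀ j, (F.induce (P j)).Connected)
    (hfiber : ∀ v : VF, (G.induce (f ⁻¹' {v})).Connected)
    (hedge : ∀ a b : VF, F.Adj a b → ∃ u v, f u = a ∧ f v = b ∧ G.Adj u v) :
    ∀ j, (G.induce (f ⁻¹' (P j))).Connected := by
  intro j
  have key : ∀ (a b : ↑(P j)) (_ : (F.induce (P j)).Walk a b) (u v : VG)
      (hu : f u = a) (hv : f v = b),
      (G.induce (f ⁻¹' P j)).Reachable
        ⟨u, show f u ∈ P j from hu ▸ a.2⟩ ⟨v, show f v ∈ P j from hv ▸ b.2⟩ := by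
    intro a b w
    induction w with
    | @nil a =>
      intro u v hu hv
      exact fiber_reach G f hfiber a.2 hu hv _ _
    | @cons a c b h p ih =>
      intro u v hu hv
      have hF : F.Adj a c := h
      obtain ⟨u', v', hu', hv', hG⟩ := hedge a c hF
      have huP : u' ∈ f ⁻¹' (P j) := by
        simp only [Set.mem_preimage, hu']; exact a.2
      have hvP : v' ∈ f ⁻¹' (P j) := by
        simp only [Set.mem_preimage, hv']; exact c.2
      have r1 : (G.induce (f ⁻¹' P j)).Reachable
          ⟨u, show f u ∈ P j from hu ▸ a.2⟩ ⟨u', huP⟩ :=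
        fiber_reach G f hfiber a.2 hu hu' _ _
      have r2 : (G.induce (f ⁻¹' P j)).Reachable ⟨u', huP⟩ ⟨v', hvP⟩ :=
        Adj.reachable (by exact hG)
      exact (r1.trans r2).trans (ih v' v hv' hv)
  rw [SimpleGraph.connected_iff]
  constructor
  · rintro ⟨u, hu⟩ ⟨v, hv⟩
    have hfu : f u ∈ P j := hu
    have hfv : f v ∈ P j := hv
    obtain ⟨w⟩ := (hPconn j).preconnected ⟨f u, hfu⟩ ⟨f v, hfv⟩
    exact key _ _ w u v rfl rfl
  · obtain ⟨a, ha⟩ := hne j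
    obtain ⟨u, rfl⟩ := hf a
    exact ⟨⟨u, ha⟩⟩
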